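/- arXiv:2505.23591 — 2 statements merged into one kernel-verified Lean document; each statement's English description precedes it below -/
import Mathlib

section
/- For every real a > 0, the function x ↦ tanh(a·x)/x is strictly decreasing on (0, ∞). -/
/-!
Since `tanh (a * x) / x = a * g (a * x)` with `g t = tanh t / t`, it suffices that `g` is strictly
decreasing on `(0, ∞)`. The numerator of `g'` is `t - sinh t * cosh t = t - sinh (2 * t) / 2`,
which is negative because `sinh s > s` for `s > 0`.
-/

open Real Set

theorem Real.hasDerivAt_tanh_div_self {x : ℝ} (hx : x ≠ 0) :
    HasDerivAt (fun t => tanh t / t) ((x - sinh x * cosh x) / (x * cosh x) ^ 2) x := by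
  have hquot : HasDerivAt (fun t => sinh t / (t * cosh t))
      ((cosh x * (x * cosh x) - sinh x * (1 * cosh x + x * sinh x)) / (x * cosh x) ^ 2) x :=
    (hasDerivAt_sinh x).div ((hasDerivAt_id' x).mul (hasDerivAt_cosh x))
      (mul_ne_zero hx (cosh_pos x).ne')
  have hfun : (fun t => tanh t / t) = fun t => sinh t / (t * cosh t) := by
    funext t
    rw [tanh_eq_sinh_div_cosh, div_div, mul_comm]
  rw [hfun]
  convert hquot using 2
  linear_combination (-x) * cosh_sq_sub_sinh_sq x

theorem Real.self_lt_sinh_mul_cosh {x : ℝ} (hx : 0 < x) : x < sinh x * cosh x := by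
  have h := self_lt_sinh_iff.mpr (mul_pos two_pos hx)
  rw [sinh_two_mul] at h
  linarith

theorem Real.strictAntiOn_tanh_div_self : StrictAntiOn (fun t => tanh t / t) (Ioi 0) := by
  refine strictAntiOn_of_hasDerivWithinAt_neg (convex_Ioi 0)
    (f' := fun x => (x - sinh x * cosh x) / (x * cosh x) ^ 2)
    (fun x hx => (hasDerivAt_tanh_div_self (ne_of_gt hx)).continuousAt.continuousWithinAt)
    (fun x hx => ?_) (fun x hx => ?_)
  all_goals rw [interior_Ioi] at hx
  · exact (hasDerivAt_tanh_div_self (ne_of_gt hx)).hasDerivWithinAt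
  · exact div_neg_of_neg_of_pos (sub_neg.mpr (self_lt_sinh_mul_cosh hx))
      (pow_pos (mul_pos hx (cosh_pos x)) 2)

theorem stmt_10 (a : ℝ) (ha : 0 < a) :
    StrictAntiOn (fun x : ℝ => Real.tanh (a * x) / x) (Set.Ioi 0) := by
  intro x hx y hy hxy
  have h := strictAntiOn_tanh_div_self (mul_pos ha hx) (mul_pos ha hy)
    (mul_lt_mul_of_pos_left hxy ha)
  simp only [div_mul_eq_div_div_swap] at h
  exact (div_lt_div_iff_of_pos_right ha).mp h
end

section
/- For every real x with 0 < x < π/2, log(sin(x)²/x²) > −x²/2 and log(sinh(x)²/x²) < x²/2. -/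
/-!
Write `log (f x ^ 2 / x ^ 2) = 2 log (f x / x)`. For the sine, `sin x / x > 1 - x² / 6`, and
`1 - x² / 6 ≥ 1 - u + u² / 2 ≥ exp (-u)` with `u = x² / 4` as long as `x² ≤ 8 / 3`, which holds on
`(0, π / 2)`. For the hyperbolic sine, comparing power series termwise with `(2n + 1)! ≥ 6ⁿ n!`
gives `sinh x / x ≤ exp (x² / 6) < exp (x² / 4)`.
-/

open Real
open scoped Nat

theorem Nat.six_pow_mul_factorial_le_factorial_two_mul_add_one (n : ℕ) :
    6 ^ n * n ! ≤ (2 * n + 1)! := by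
  induction n with
  | zero => simp
  | succ n ih =>
    calc 6 ^ (n + 1) * (n + 1)! = 6 * (n + 1) * (6 ^ n * n !) := by
          rw [Nat.factorial_succ]; ring
      _ ≤ (2 * n + 3) * (2 * n + 2) * (2 * n + 1)! := Nat.mul_le_mul (by nlinarith) ih
      _ = (2 * (n + 1) + 1)! := by
          rw [show 2 * (n + 1) + 1 = 2 * n + 1 + 1 + 1 by ring, Nat.factorial_succ (2 * n + 1 + 1),
            Nat.factorial_succ (2 * n + 1)]
          ring

theorem Real.sinh_le_mul_exp_sq_div_six {x : ℝ} (hx : 0 ≤ x) :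
    sinh x ≤ x * exp (x ^ 2 / 6) := by
  rw [sinh_eq_tsum, exp_eq_exp_ℝ, NormedSpace.exp_eq_tsum ℝ, ← tsum_mul_left]
  refine x.hasSum_sinh.summable.tsum_le_tsum (fun n ↦ ?_)
    ((NormedSpace.expSeries_summable' (x ^ 2 / 6)).mul_left x)
  have key : (6 : ℝ) ^ n * n ! ≤ (2 * n + 1)! := by
    exact_mod_cast Nat.six_pow_mul_factorial_le_factorial_two_mul_add_one n
  rw [smul_eq_mul, div_pow, ← pow_mul, pow_succ', mul_div_assoc, inv_mul_eq_div, div_div]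
  gcongr

theorem Real.exp_neg_le_one_sub_add_sq_div_two {u : ℝ} (hu : 0 ≤ u) :
    exp (-u) ≤ 1 - u + u ^ 2 / 2 := by
  rw [exp_neg, inv_le_iff_one_le_mul₀ (exp_pos u)]
  -- `(1 + u + u² / 2) (1 - u + u² / 2) = 1 + u⁴ / 4`
  calc (1 : ℝ) ≤ (1 + u + u ^ 2 / 2) * (1 - u + u ^ 2 / 2) := by nlinarith [pow_two_nonneg (u ^ 2)]
    _ ≤ (1 - u + u ^ 2 / 2) * exp u := by
        rw [mul_comm]
        gcongr
        · nlinarith [sq_nonneg (u - 1)]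
        · exact quadratic_le_exp_of_nonneg hu

theorem Real.exp_neg_sq_div_four_lt_sin_div {x : ℝ} (hx0 : 0 < x) (hx : x ^ 2 ≤ 8 / 3) :
    exp (-(x ^ 2 / 4)) < sin x / x := by
  rw [lt_div_iff₀ hx0]
  calc exp (-(x ^ 2 / 4)) * x ≤ (1 - x ^ 2 / 4 + (x ^ 2 / 4) ^ 2 / 2) * x := by
        gcongr; exact exp_neg_le_one_sub_add_sq_div_two (by positivity)
    _ ≤ x - x ^ 3 / 6 := by nlinarith [sq_nonneg x]
    _ < sin x := sin_gt_sub_cube hx0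

theorem stmt_12 (x : ℝ) (hx0 : 0 < x) (hx : x < Real.pi / 2) :
    Real.log (Real.sin x ^ 2 / x ^ 2) > -x ^ 2 / 2 ∧
    Real.log (Real.sinh x ^ 2 / x ^ 2) < x ^ 2 / 2 := by
  have hx2 : x ^ 2 ≤ 8 / 3 := by nlinarith [pi_lt_d2]
  have hsin : -(x ^ 2 / 4) < log (sin x / x) :=
    (lt_log_iff_exp_lt (div_pos (sin_pos_of_pos_of_lt_pi hx0 (by linarith [pi_pos])) hx0)).2
      (exp_neg_sq_div_four_lt_sin_div hx0 hx2)
  have hsinh : log (sinh x / x) ≤ x ^ 2 / 6 :=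
    (log_le_iff_le_exp (div_pos (sinh_pos_iff.2 hx0) hx0)).2
      ((div_le_iff₀' hx0).2 (sinh_le_mul_exp_sq_div_six hx0.le))
  rw [← div_pow, ← div_pow, log_pow, log_pow]
  push_cast
  constructor <;> nlinarith
end
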